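/- arXiv:math/0608687 — 2 statements merged into one kernel-verified Lean document; each statement's English description precedes it below -/
import Mathlib

section
/- Let X be a B-valued random variable and let {c_n} be a sequence of positive reals such that c_n/√n is nondecreasing and tends to infinity, and such that for every ε > 0 there is m_ε ≥ 1 with c_n/c_m ≤ (1+ε)·(n/m) for all m_ε ≤ m < n. Assume ∑_{n=1}^∞ P{‖X‖ ≥ c_n} < ∞. Then, as n → ∞, ∑_{i=1}^n 𝔼[‖X‖·1{‖X‖ ≥ c_i}] = o(c_n); in particular n·𝔼[‖X‖·1{‖X‖ ≥ c_n}] = o(c_n). -/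
open MeasureTheory ProbabilityTheory Filter Set ENNReal

noncomputable section

/-- `L t = log (max t e)`. -/
def Lf (t : ℝ) : ℝ := Real.log (max t (Real.exp 1))

/-- `LL t = L (L t)`. -/
def LLf (t : ℝ) : ℝ := Lf (Lf t)

/-- A function is slowly varying at infinity. -/
def SlowlyVarying (h : ℝ → ℝ) : Prop :=
  ∀ c : ℝ, 0 < c → Tendsto (fun t => h (c * t) / h t) atTop (nhds 1)

/-- The class `𝓗` of continuous, nondecreasing, positive functions on `[0,∞)`
that are slowly varying at infinity. -/
def MemH (h : ℝ → ℝ) : Prop :=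
  ContinuousOn h (Set.Ici 0) ∧ MonotoneOn h (Set.Ici 0) ∧ (∀ x, 0 ≤ x → 0 < h x) ∧
    SlowlyVarying h

/-- The subclass `𝓗_q`, `0 ≤ q ≤ 1`:  all `h ∈ 𝓗` with
`h(t·exp((Lt)^τ))/h(t) → 1` for every `0 < τ < 1 - q` (for `q = 1` this is all of `𝓗`). -/
def MemHq (q : ℝ) (h : ℝ → ℝ) : Prop :=
  MemH h ∧ ∀ τ : ℝ, 0 < τ → τ < 1 - q →
    Tendsto (fun t => h (t * Real.exp ((Lf t) ^ τ)) / h t) atTop (nhds 1)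

/-- `Ψ(x) = √(x h(x))`. -/
def Psi (h : ℝ → ℝ) (x : ℝ) : ℝ := Real.sqrt (x * h x)

/-- The infinite-dimensional truncated second moment function
`H(t) = sup_{f ∈ B₁*} 𝔼[f(X)² 1{‖X‖ ≤ t}]`. -/
def Hfun {Ω B : Type*} [MeasurableSpace Ω] [NormedAddCommGroup B] [NormedSpace ℝ B]
    (μ : Measure Ω) (X : Ω → B) (t : ℝ) : ℝ :=
  sSup {x : ℝ | ∃ f : B →L[ℝ] ℝ, ‖f‖ ≤ 1 ∧ x = ∫ ω in {ω | ‖X ω‖ ≤ t}, (f (X ω))^2 ∂μ}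

/-- The regularity conditions (4.1) and (4.2) on the norming sequence:
`c_n/√n` is nondecreasing and tends to `∞`, and for every `ε > 0` there is
`m_ε ≥ 1` with `c_n/c_m ≤ (1+ε)(n/m)` for `m_ε ≤ m < n`. -/
def CSeq (c : ℕ → ℝ) : Prop :=
  (∀ n : ℕ, 1 ≤ n → 0 < c n) ∧
  (∀ m n : ℕ, 1 ≤ m → m ≤ n → c m / Real.sqrt m ≤ c n / Real.sqrt n) ∧
  Tendsto (fun n : ℕ => c n / Real.sqrt n) atTop atTop ∧
  (∀ ε : ℝ, 0 < ε → ∃ m₀ : ℕ, 1 ≤ m₀ ∧ ∀ m n : ℕ, m₀ ≤ m → m < n →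
    c n / c m ≤ (1 + ε) * ((n : ℝ) / m))

/-- `α₀ = sup {α ≥ 0 : ∑ n⁻¹ exp(-α² c_n²/(2n H(c_n))) = ∞}` (as an element of `[0,∞]`). -/
def alpha0 {Ω B : Type*} [MeasurableSpace Ω] [NormedAddCommGroup B] [NormedSpace ℝ B]
    (μ : Measure Ω) (X0 : Ω → B) (c : ℕ → ℝ) : ℝ≥0∞ :=
  sSup {x : ℝ≥0∞ | ∃ α : ℝ, 0 ≤ α ∧ x = ENNReal.ofReal α ∧
    ¬ Summable (fun n : ℕ => (n : ℝ)⁻¹ *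
      Real.exp (-(α ^ 2 * c n ^ 2) / (2 * n * Hfun μ X0 (c n))))}

set_option maxHeartbeats 2000000 in
/-- Fact (4.12): `∑_{i=1}^n 𝔼‖X‖1{‖X‖ ≥ c_i} = o(c_n)`; in particular
`n 𝔼‖X‖1{‖X‖ ≥ c_n} = o(c_n)`. -/
theorem truncated_first_moment_little_o
    {Ω B : Type*} [MeasurableSpace Ω] (μ : Measure Ω) [IsProbabilityMeasure μ]
    [NormedAddCommGroup B] [NormedSpace ℝ B] [CompleteSpace B] [SecondCountableTopology B]
    [MeasurableSpace B] [BorelSpace B]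
    (X0 : Ω → B) (hmeas0 : Measurable X0)
    (c : ℕ → ℝ) (hc : CSeq c)
    (hmom : (∑' n : ℕ, μ {ω | c n ≤ ‖X0 ω‖}) < ⊤) :
    Tendsto (fun n : ℕ =>
      (∑ i ∈ Finset.Icc 1 n, ∫ ω in {ω | c i ≤ ‖X0 ω‖}, ‖X0 ω‖ ∂μ) / c n)
      atTop (nhds 0) ∧
    Tendsto (fun n : ℕ =>
      (n : ℝ) * (∫ ω in {ω | c n ≤ ‖X0 ω‖}, ‖X0 ω‖ ∂μ) / c n) atTop (nhds 0) := by
  classical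
  obtain ⟨hpos, hmon, htendq, hratio⟩ := hc
  have hY : Measurable fun ω => ‖X0 ω‖ := hmeas0.norm
  -- monotonicity of c on [1,∞)
  have hcmono : ∀ m n : ℕ, 1 ≤ m → m ≤ n → c m ≤ c n := by
    intro m n hm hmn
    have hn : 1 ≤ n := le_trans hm hmn
    have h1 := hmon m n hm hmn
    have hsm : (0:ℝ) < Real.sqrt m := Real.sqrt_pos.2 (by exact_mod_cast hm)
    have hsn : (0:ℝ) < Real.sqrt n := Real.sqrt_pos.2 (by exact_mod_cast hn)
    have hss : Real.sqrt m ≤ Real.sqrt n :=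
      Real.sqrt_le_sqrt (by exact_mod_cast hmn)
    have := mul_le_mul h1 hss hsm.le (div_nonneg (hpos n hn).le hsn.le)
    rwa [div_mul_cancel₀ _ hsm.ne', div_mul_cancel₀ _ hsn.ne'] at this
  -- c tends to infinity
  have hctop : Tendsto c atTop atTop := by
    apply tendsto_atTop_mono' atTop _ htendq
    filter_upwards [eventually_ge_atTop 1] with n hn
    have h1 : (1:ℝ) ≤ Real.sqrt n := by
      rw [show (1:ℝ) = Real.sqrt 1 by simp]
      exact Real.sqrt_le_sqrt (by exact_mod_cast hn)
    exact div_le_self (hpos n hn).le h1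
  -- ratio with ε = 1
  obtain ⟨m₁, hm₁1, hm₁⟩ := hratio 1 one_pos
  have hstep : ∀ m n : ℕ, m₁ ≤ m → m < n → c n ≤ 2 * ((n:ℝ)/m) * c m := by
    intro m n hm hmn
    have hcm : 0 < c m := hpos m (le_trans hm₁1 hm)
    have h1 := hm₁ m n hm hmn
    rw [div_le_iff₀ hcm] at h1
    nlinarith [h1]
  -- constant K with c (j+1) ≤ K c j for all j ≥ 1
  set K : ℝ := 4 + ∑ j ∈ Finset.Icc 1 m₁, c (j+1) / c j with hKdef
  have hsum_nonneg : 0 ≤ ∑ j ∈ Finset.Icc 1 m₁, c (j+1) / c j := by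
    refine Finset.sum_nonneg fun j hj => ?_
    obtain ⟨hj1, _⟩ := Finset.mem_Icc.1 hj
    exact div_nonneg (hpos (j+1) (by omega)).le (hpos j hj1).le
  have hK4 : (4:ℝ) ≤ K := by rw [hKdef]; linarith
  have hKpos : (0:ℝ) < K := by linarith
  have hKstep : ∀ j : ℕ, 1 ≤ j → c (j+1) ≤ K * c j := by
    intro j hj
    have hcj : 0 < c j := hpos j hj
    rcases le_or_gt m₁ j with h | h
    · have h2 := hstep j (j+1) h (Nat.lt_succ_self j)
      have hjr : (1:ℝ) ≤ (j:ℝ) := by exact_mod_cast hj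
      have hcast : ((j+1 : ℕ):ℝ) = (j:ℝ) + 1 := by push_cast; ring
      rw [hcast] at h2
      have hfrac : ((j:ℝ)+1)/(j:ℝ) ≤ 2 := by
        rw [div_le_iff₀ (by linarith)]; linarith
      have : 2 * (((j:ℝ)+1)/(j:ℝ)) * c j ≤ 4 * c j := by nlinarith
      nlinarith
    · have hmem : j ∈ Finset.Icc 1 m₁ := Finset.mem_Icc.2 ⟨hj, h.le⟩
      have hle : c (j+1)/c j ≤ ∑ i ∈ Finset.Icc 1 m₁, c (i+1) / c i := by
        refine Finset.single_le_sum (f := fun i => c (i+1) / c i) (fun i hi => ?_) hmem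
        obtain ⟨hi1, _⟩ := Finset.mem_Icc.1 hi
        exact div_nonneg (hpos (i+1) (by omega)).le (hpos i hi1).le
      have hle2 : c (j+1)/c j ≤ K := by rw [hKdef]; linarith
      rw [div_le_iff₀ hcj] at hle2
      linarith
  -- linear growth constant C
  have hcm₁pos : 0 < c m₁ := hpos m₁ hm₁1
  set C : ℝ := c m₁ + 2 * c m₁ / m₁ with hCdef
  have hm₁r : (1:ℝ) ≤ (m₁:ℝ) := by exact_mod_cast hm₁1
  have hCpos : (0:ℝ) < C := by
    rw [hCdef]; have : 0 < 2 * c m₁ / (m₁:ℝ) := by positivity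
    linarith
  have hCj : ∀ j : ℕ, 1 ≤ j → c j ≤ C * j := by
    intro j hj
    have hj1 : (1:ℝ) ≤ (j:ℝ) := by exact_mod_cast hj
    rcases le_or_gt j m₁ with h | h
    · have h1 : c j ≤ c m₁ := hcmono j m₁ hj h
      have h2 : 0 ≤ 2 * c m₁ / (m₁:ℝ) := by positivity
      rw [hCdef]; nlinarith
    · have h2 := hstep m₁ j le_rfl h
      have heq : 2 * ((j:ℝ)/(m₁:ℝ)) * c m₁ = (2 * c m₁ / (m₁:ℝ)) * j := by
        field_simp
      rw [heq] at h2
      rw [hCdef]; nlinarith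
  have hKC : ∀ j : ℕ, 1 ≤ j → c (j+1) ≤ K * C * j := by
    intro j hj
    calc c (j+1) ≤ K * c j := hKstep j hj
    _ ≤ K * (C * j) := by
        exact mul_le_mul_of_nonneg_left (hCj j hj) hKpos.le
    _ = K * C * j := by ring
  -- shells
  set D : ℕ → Set Ω := fun j => {ω | c j ≤ ‖X0 ω‖ ∧ ‖X0 ω‖ < c (j+1)} with hDdef
  have hDmeas : ∀ j, MeasurableSet (D j) := by
    intro j
    simp only [hDdef]
    exact MeasurableSet.inter (measurableSet_le measurable_const hY)
      (measurableSet_lt hY measurable_const)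
  have hDdisj : ∀ j j' : ℕ, 1 ≤ j → 1 ≤ j' → j ≠ j' → Disjoint (D j) (D j') := by
    have key : ∀ j j' : ℕ, 1 ≤ j → j < j' → Disjoint (D j) (D j') := by
      intro j j' hj hjj'
      rw [Set.disjoint_left]
      rintro ω hω hω'
      simp only [hDdef, Set.mem_setOf_eq] at hω hω'
      have : c (j+1) ≤ c j' := hcmono (j+1) j' (by omega) (by omega)
      linarith [hω.2, hω'.1]
    intro j j' hj hj' hne
    rcases lt_or_gt_of_ne hne with h | h
    · exact key j j' hj h
    · exact (key j' j hj' h).symm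
  set p : ℕ → ℝ≥0∞ := fun j => μ (D j) with hpdef
  set a : ℕ → ℝ≥0∞ := fun j => ∫⁻ ω in D j, ENNReal.ofReal ‖X0 ω‖ ∂μ with hadef
  set A : ℕ → ℝ≥0∞ := fun i => ∫⁻ ω in {ω | c i ≤ ‖X0 ω‖}, ENNReal.ofReal ‖X0 ω‖ ∂μ
    with hAdef
  -- covering
  have hcover : ∀ i : ℕ, 1 ≤ i →
      {ω | c i ≤ ‖X0 ω‖} = ⋃ j : ℕ, (if i ≤ j then D j else ∅) := by
    intro i hi
    ext ω
    simp only [Set.mem_setOf_eq, Set.mem_iUnion]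
    constructor
    · intro hω
      have hex : ∃ k : ℕ, ‖X0 ω‖ < c (i + k + 1) := by
        obtain ⟨M, hM⟩ := eventually_atTop.1 (hctop.eventually_ge_atTop (‖X0 ω‖ + 1))
        exact ⟨M + i, by have := hM (i + (M + i) + 1) (by omega); linarith⟩
      obtain ⟨k, hks, hkm⟩ : ∃ k : ℕ, ‖X0 ω‖ < c (i + k + 1) ∧
          ∀ l, l < k → ¬ ‖X0 ω‖ < c (i + l + 1) :=
        ⟨Nat.find hex, Nat.find_spec hex, fun l hl => Nat.find_min hex hl⟩
      refine ⟨i + k, ?_⟩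
      rw [if_pos (by omega)]
      simp only [hDdef, Set.mem_setOf_eq]
      refine ⟨?_, hks⟩
      rcases k with _ | k'
      · simpa using hω
      · have hh := hkm k' (Nat.lt_succ_self k')
        push_neg at hh
        exact hh
    · rintro ⟨j, hj⟩
      split_ifs at hj with h
      · simp only [hDdef, Set.mem_setOf_eq] at hj
        exact le_trans (hcmono i j hi h) hj.1
      · exact absurd hj (Set.notMem_empty ω)
  have hfammeas : ∀ i : ℕ, ∀ j : ℕ, MeasurableSet (if i ≤ j then D j else (∅ : Set Ω)) := by
    intro i j; split_ifs; exacts [hDmeas j, MeasurableSet.empty]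
  have hfamdisj : ∀ i : ℕ, 1 ≤ i →
      Pairwise (Function.onFun Disjoint (fun j => if i ≤ j then D j else (∅ : Set Ω))) := by
    intro i hi j j' hne
    simp only [Function.onFun]
    split_ifs with h h'
    · exact hDdisj j j' (le_trans hi h) (le_trans hi h') hne
    · exact Set.disjoint_empty _
    · exact Set.empty_disjoint _
    · exact Set.disjoint_empty _
  have hA_eq : ∀ i : ℕ, 1 ≤ i → A i = ∑' j : ℕ, (if i ≤ j then a j else 0) := by
    intro i hi
    simp only [hAdef]
    rw [hcover i hi, lintegral_iUnion (hfammeas i) (hfamdisj i hi)]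
    refine tsum_congr fun j => ?_
    split_ifs with h
    · rfl
    · simp
  have hp_eq : ∀ i : ℕ, 1 ≤ i →
      μ {ω | c i ≤ ‖X0 ω‖} = ∑' j : ℕ, (if i ≤ j then p j else 0) := by
    intro i hi
    rw [hcover i hi, measure_iUnion (hfamdisj i hi) (hfammeas i)]
    refine tsum_congr fun j => ?_
    split_ifs with h
    · rfl
    · simp
  -- the weighted sum W
  set W : ℝ≥0∞ := ∑' j : ℕ, (j : ℝ≥0∞) * p j with hWdef
  have hW : W ≠ ⊤ := by
    have h1 : ∀ j : ℕ, (j : ℝ≥0∞) * p j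
        = ∑' i : ℕ, (if 1 ≤ i ∧ i ≤ j then p j else 0) := by
      intro j
      rw [tsum_eq_sum (s := Finset.Icc 1 j) (fun b hb => by
        rw [if_neg]; simpa [Finset.mem_Icc] using hb)]
      rw [Finset.sum_congr rfl (fun i hi => if_pos (by simpa [Finset.mem_Icc] using hi))]
      rw [Finset.sum_const, Nat.card_Icc, nsmul_eq_mul]
      have hj1 : j + 1 - 1 = j := by omega
      rw [hj1]
    have h2 : W ≤ ∑' i : ℕ, μ {ω | c i ≤ ‖X0 ω‖} := by
      rw [hWdef]
      calc ∑' j : ℕ, (j : ℝ≥0∞) * p j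
          = ∑' j : ℕ, ∑' i : ℕ, (if 1 ≤ i ∧ i ≤ j then p j else 0) := tsum_congr h1
        _ = ∑' i : ℕ, ∑' j : ℕ, (if 1 ≤ i ∧ i ≤ j then p j else 0) := ENNReal.tsum_comm
        _ ≤ ∑' i : ℕ, μ {ω | c i ≤ ‖X0 ω‖} := by
            refine ENNReal.tsum_le_tsum fun i => ?_
            rcases Nat.eq_zero_or_pos i with hi | hi
            · simp [hi]
            · rw [hp_eq i hi]
              refine le_of_eq (tsum_congr fun j => ?_)
              by_cases h : i ≤ j
              · have hi1 : 1 ≤ i := hi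
                rw [if_pos ⟨hi1, h⟩, if_pos h]
              · rw [if_neg (fun hcc => h hcc.2), if_neg h]
    exact (lt_of_le_of_lt h2 hmom).ne
  -- bounds on a
  have ha_le : ∀ j : ℕ, a j ≤ ENNReal.ofReal (c (j+1)) * p j := by
    intro j
    simp only [hadef, hpdef]
    calc (∫⁻ ω in D j, ENNReal.ofReal ‖X0 ω‖ ∂μ)
        ≤ ∫⁻ _ in D j, ENNReal.ofReal (c (j+1)) ∂μ := by
          refine setLIntegral_mono measurable_const fun ω hω => ?_
          simp only [hDdef, Set.mem_setOf_eq] at hω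
          exact ENNReal.ofReal_le_ofReal hω.2.le
      _ = ENNReal.ofReal (c (j+1)) * μ (D j) := setLIntegral_const _ _
  have ha_le' : ∀ j : ℕ, 1 ≤ j →
      a j ≤ ENNReal.ofReal (K * C) * ((j:ℝ≥0∞) * p j) := by
    intro j hj
    refine (ha_le j).trans ?_
    rw [← mul_assoc]
    refine mul_le_mul_left ?_ (p j)
    calc ENNReal.ofReal (c (j+1)) ≤ ENNReal.ofReal (K * C * j) :=
        ENNReal.ofReal_le_ofReal (hKC j hj)
      _ = ENNReal.ofReal (K*C) * (j:ℝ≥0∞) := by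
          rw [ENNReal.ofReal_mul (by positivity), ENNReal.ofReal_natCast]
  have hA1top : A 1 ≠ ⊤ := by
    have hA1 : A 1 ≤ ENNReal.ofReal (K*C) * W := by
      rw [hA_eq 1 le_rfl, hWdef, ← ENNReal.tsum_mul_left]
      refine ENNReal.tsum_le_tsum fun j => ?_
      rcases Nat.eq_zero_or_pos j with h | h
      · simp [h]
      · have h1 : 1 ≤ j := h
        rw [if_pos h1]; exact ha_le' j h1
    exact (lt_of_le_of_lt hA1 (ENNReal.mul_lt_top ENNReal.ofReal_lt_top
      (lt_top_iff_ne_top.2 hW))).ne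
  have hAmono : ∀ i i' : ℕ, 1 ≤ i → i ≤ i' → A i' ≤ A i := by
    intro i i' hi hii'
    simp only [hAdef]
    refine lintegral_mono_set fun ω hω => ?_
    exact le_trans (hcmono i i' hi hii') hω
  have hAfin : ∀ i : ℕ, 1 ≤ i → A i ≠ ⊤ :=
    fun i hi => ne_top_of_le_ne_top hA1top (hAmono 1 i le_rfl hi)
  have hafin : ∀ j : ℕ, 1 ≤ j → a j ≤ A 1 := by
    intro j hj
    simp only [hadef, hAdef]
    refine lintegral_mono_set fun ω hω => ?_
    simp only [hDdef, Set.mem_setOf_eq] at hω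
    exact le_trans (hcmono 1 j le_rfl hj) hω.1
  -- real <-> ennreal
  have hIeq : ∀ i : ℕ, (∫ ω in {ω | c i ≤ ‖X0 ω‖}, ‖X0 ω‖ ∂μ) = (A i).toReal := by
    intro i
    simp only [hAdef]
    exact integral_eq_lintegral_of_nonneg_ae
      (Filter.Eventually.of_forall fun ω => norm_nonneg _)
      hY.aestronglyMeasurable
  -- sum identity
  have hsum_id : ∀ n : ℕ, ∑ i ∈ Finset.Icc 1 n, A i
      = ∑' j : ℕ, ((min j n : ℕ) : ℝ≥0∞) * a j := by
    intro n
    rw [Finset.sum_congr rfl (fun i hi => hA_eq i (Finset.mem_Icc.1 hi).1)]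
    rw [← Summable.tsum_finsetSum (fun i _ => ENNReal.summable)]
    refine tsum_congr fun j => ?_
    rw [← Finset.sum_filter]
    have hfil : Finset.filter (fun i => i ≤ j) (Finset.Icc 1 n)
        = Finset.Icc 1 (min j n) := by
      ext i
      simp only [Finset.mem_filter, Finset.mem_Icc]
      omega
    rw [hfil, Finset.sum_const, Nat.card_Icc, nsmul_eq_mul]
    have hmn : min j n + 1 - 1 = min j n := by omega
    rw [hmn]
  -- main estimate
  have key : ∀ ε : ℝ, 0 < ε → ∃ N : ℕ, 1 ≤ N ∧ ∀ n : ℕ, N ≤ n →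
      ∑ i ∈ Finset.Icc 1 n, A i ≤ ENNReal.ofReal (ε * c n) := by
    intro ε hε
    -- tail of the weighted sum
    have htail := ENNReal.tendsto_sum_nat_add (fun j => (j:ℝ≥0∞) * p j) hW
    have hofpos : (0:ℝ≥0∞) < ENNReal.ofReal (ε/(4*K)) :=
      ENNReal.ofReal_pos.2 (by positivity)
    obtain ⟨N₀, hN₀⟩ := eventually_atTop.1 (htail.eventually_lt_const hofpos)
    -- constant part
    set Cst : ℝ≥0∞ := ∑ j ∈ Finset.range N₀, (j:ℝ≥0∞) * a j with hCstdef
    have hCstfin : Cst ≠ ⊤ := by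
      rw [hCstdef]
      refine (ENNReal.sum_lt_top.2 fun j _ => ?_).ne
      rcases Nat.eq_zero_or_pos j with h | h
      · simp [h]
      · exact ENNReal.mul_lt_top (ENNReal.natCast_lt_top j)
          (lt_of_le_of_lt (hafin j h) (lt_top_iff_ne_top.2 hA1top))
    have hev : ∀ᶠ n in atTop, Cst.toReal ≤ (ε/2) * c n := by
      filter_upwards [hctop.eventually_ge_atTop ((2/ε) * Cst.toReal)] with n hn
      have h2 := mul_le_mul_of_nonneg_left hn (half_pos hε).le
      have h3 : ε/2 * (2/ε * Cst.toReal) = Cst.toReal := by field_simp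
      linarith
    obtain ⟨N₁, hN₁⟩ := eventually_atTop.1 hev
    refine ⟨max (max N₀ m₁) N₁ + 1, Nat.le_add_left 1 _, fun n hn => ?_⟩
    have hn1 : 1 ≤ n := by omega
    have hnN₀ : N₀ ≤ n := by omega
    have hnm₁ : m₁ ≤ n := by omega
    have hnN₁ : N₁ ≤ n := by omega
    have hcn : 0 < c n := hpos n hn1
    have hgen : ∀ j : ℕ, 1 ≤ j →
        ((min j n : ℕ):ℝ≥0∞) * a j ≤ ENNReal.ofReal (2*K*c n) * ((j:ℝ≥0∞) * p j) := by
      intro j hj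
      have hjr : (1:ℝ) ≤ (j:ℝ) := by exact_mod_cast hj
      have hnr : (1:ℝ) ≤ (n:ℝ) := by exact_mod_cast hn1
      have hcj1 : 0 ≤ c (j+1) := (hpos (j+1) (by omega)).le
      have hkey : ((min j n : ℕ):ℝ) * c (j+1) ≤ 2*K*c n * j := by
        rcases le_or_gt j n with hjn | hjn
        · rw [min_eq_left hjn]
          have h1 : c (j+1) ≤ K * c j := hKstep j hj
          have h2 : c j ≤ c n := hcmono j n hj hjn
          have e1 : (j:ℝ) * c (j+1) ≤ (j:ℝ) * (K * c j) :=
            mul_le_mul_of_nonneg_left h1 (by linarith)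
          have e2 : (j:ℝ) * (K * c j) ≤ (j:ℝ) * (K * c n) :=
            mul_le_mul_of_nonneg_left (by nlinarith) (by linarith)
          have e3 : 0 ≤ K * c n * (j:ℝ) := by positivity
          linarith
        · rw [min_eq_right hjn.le]
          have h1 : c (j+1) ≤ K * c j := hKstep j hj
          have h2 : c j ≤ 2 * ((j:ℝ)/(n:ℝ)) * c n := hstep n j hnm₁ hjn
          have h3 : (n:ℝ) * ((j:ℝ)/(n:ℝ)) = (j:ℝ) := by field_simp
          have h4 : (n:ℝ) * c (j+1) ≤ (n:ℝ) * (K * c j) :=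
            mul_le_mul_of_nonneg_left h1 (by linarith)
          have h5 : (n:ℝ) * (K * c j) ≤ K * (2 * ((n:ℝ) * ((j:ℝ)/(n:ℝ))) * c n) := by
            have := mul_le_mul_of_nonneg_left h2 (by positivity : (0:ℝ) ≤ K * (n:ℝ))
            linarith
          rw [h3] at h5
          nlinarith
      calc ((min j n : ℕ):ℝ≥0∞) * a j
          ≤ ((min j n : ℕ):ℝ≥0∞) * (ENNReal.ofReal (c (j+1)) * p j) :=
            mul_le_mul_right (ha_le j) _
        _ = (ENNReal.ofReal ((min j n : ℕ):ℝ) * ENNReal.ofReal (c (j+1))) * p j := by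
            rw [ENNReal.ofReal_natCast, mul_assoc]
        _ = ENNReal.ofReal (((min j n : ℕ):ℝ) * c (j+1)) * p j := by
            rw [ENNReal.ofReal_mul (by positivity)]
        _ ≤ ENNReal.ofReal (2*K*c n * j) * p j :=
            mul_le_mul_left (ENNReal.ofReal_le_ofReal hkey) _
        _ = ENNReal.ofReal (2*K*c n) * ((j:ℝ≥0∞) * p j) := by
            rw [ENNReal.ofReal_mul (by positivity), ENNReal.ofReal_natCast, mul_assoc]
    rw [hsum_id n]
    have hsplit : ∀ j : ℕ, ((min j n : ℕ):ℝ≥0∞) * a j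
        ≤ (if j < N₀ then (j:ℝ≥0∞) * a j else 0)
          + (if j < N₀ then 0 else ENNReal.ofReal (2*K*c n) * ((j:ℝ≥0∞) * p j)) := by
      intro j
      by_cases hj : j < N₀
      · rw [if_pos hj, if_pos hj, add_zero]
        exact mul_le_mul_left (Nat.cast_le.2 (min_le_left j n)) _
      · rw [if_neg hj, if_neg hj, zero_add]
        rcases Nat.eq_zero_or_pos j with h0 | h1
        · rw [h0]; simp
        · exact hgen j h1
    have htail_eq : ∑' j : ℕ, (if j < N₀ then 0
          else ENNReal.ofReal (2*K*c n) * ((j:ℝ≥0∞) * p j))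
        = ENNReal.ofReal (2*K*c n) * ∑' k : ℕ, ((k + N₀ : ℕ):ℝ≥0∞) * p (k + N₀) := by
      rw [← ENNReal.tsum_mul_left]
      have hinj := Function.Injective.tsum_eq
        (f := fun j : ℕ => if j < N₀ then 0
          else ENNReal.ofReal (2*K*c n) * ((j:ℝ≥0∞) * p j))
        (g := fun k : ℕ => k + N₀) (add_left_injective N₀) ?_
      · rw [← hinj]
        refine tsum_congr fun k => ?_
        rw [if_neg (by omega)]
      · intro x hx
        simp only [Function.mem_support] at hx
        by_cases hxN : x < N₀
        · exact absurd (if_pos hxN) hx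
        · exact ⟨x - N₀, by show x - N₀ + N₀ = x; omega⟩
    calc ∑' j : ℕ, ((min j n : ℕ):ℝ≥0∞) * a j
        ≤ ∑' j : ℕ, ((if j < N₀ then (j:ℝ≥0∞) * a j else 0)
            + (if j < N₀ then 0 else ENNReal.ofReal (2*K*c n) * ((j:ℝ≥0∞) * p j))) :=
          ENNReal.tsum_le_tsum hsplit
      _ = (∑' j : ℕ, if j < N₀ then (j:ℝ≥0∞) * a j else 0)
            + ∑' j : ℕ, (if j < N₀ then 0
              else ENNReal.ofReal (2*K*c n) * ((j:ℝ≥0∞) * p j)) := ENNReal.tsum_add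
      _ = Cst + ENNReal.ofReal (2*K*c n)
            * ∑' k : ℕ, ((k + N₀ : ℕ):ℝ≥0∞) * p (k + N₀) := by
          rw [htail_eq, hCstdef]
          congr 1
          rw [tsum_eq_sum (s := Finset.range N₀)
            (fun b hb => if_neg (by simpa using hb))]
          exact Finset.sum_congr rfl fun j hj => if_pos (Finset.mem_range.1 hj)
      _ ≤ ENNReal.ofReal ((ε/2) * c n)
            + ENNReal.ofReal (2*K*c n) * ENNReal.ofReal (ε/(4*K)) := by
          refine add_le_add ?_ ?_
          · rw [ENNReal.le_ofReal_iff_toReal_le hCstfin (by positivity)]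
            exact hN₁ n hnN₁
          · exact mul_le_mul_right (hN₀ N₀ le_rfl).le _
      _ = ENNReal.ofReal ((ε/2) * c n + (ε/2) * c n) := by
          rw [← ENNReal.ofReal_mul (by positivity),
            ← ENNReal.ofReal_add (by positivity) (by positivity)]
          congr 1
          field_simp
          ring
      _ = ENNReal.ofReal (ε * c n) := by congr 1; ring
  -- part 1
  have part1 : Tendsto (fun n : ℕ =>
      (∑ i ∈ Finset.Icc 1 n, (A i).toReal) / c n) atTop (nhds 0) := by
    rw [Metric.tendsto_atTop]
    intro ε hε
    obtain ⟨N, hN1, hN⟩ := key (ε/2) (half_pos hε)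
    refine ⟨N, fun n hn => ?_⟩
    have hn1 : 1 ≤ n := le_trans hN1 hn
    have hcn : 0 < c n := hpos n hn1
    have hT : ∑ i ∈ Finset.Icc 1 n, (A i).toReal ≤ ε/2 * c n := by
      rw [← ENNReal.toReal_sum (fun i hi => hAfin i (Finset.mem_Icc.1 hi).1)]
      exact ENNReal.toReal_le_of_le_ofReal (by positivity) (hN n hn)
    have hT0 : 0 ≤ ∑ i ∈ Finset.Icc 1 n, (A i).toReal :=
      Finset.sum_nonneg fun i _ => ENNReal.toReal_nonneg
    rw [Real.dist_eq, sub_zero, abs_of_nonneg (by positivity)]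
    calc (∑ i ∈ Finset.Icc 1 n, (A i).toReal) / c n ≤ (ε/2 * c n)/c n := by gcongr
      _ = ε/2 := by field_simp
      _ < ε := by linarith
  constructor
  · have : (fun n : ℕ => (∑ i ∈ Finset.Icc 1 n, ∫ ω in {ω | c i ≤ ‖X0 ω‖}, ‖X0 ω‖ ∂μ) / c n)
        = fun n : ℕ => (∑ i ∈ Finset.Icc 1 n, (A i).toReal) / c n := by
      funext n
      congr 1
      exact Finset.sum_congr rfl fun i _ => hIeq i
    rw [this]
    exact part1
  · have hle : ∀ n : ℕ, 1 ≤ n →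
        (n:ℝ) * (A n).toReal ≤ ∑ i ∈ Finset.Icc 1 n, (A i).toReal := by
      intro n hn
      have h1 : ∀ i ∈ Finset.Icc 1 n, (A n).toReal ≤ (A i).toReal := by
        intro i hi
        obtain ⟨hi1, hin⟩ := Finset.mem_Icc.1 hi
        exact ENNReal.toReal_mono (hAfin i hi1) (hAmono i n hi1 hin)
      calc (n:ℝ) * (A n).toReal = ∑ _i ∈ Finset.Icc 1 n, (A n).toReal := by
            rw [Finset.sum_const, Nat.card_Icc, nsmul_eq_mul]
            have hmn : n + 1 - 1 = n := by omega
            rw [hmn]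
        _ ≤ _ := Finset.sum_le_sum h1
    have heq : (fun n : ℕ => (n:ℝ) * (∫ ω in {ω | c n ≤ ‖X0 ω‖}, ‖X0 ω‖ ∂μ) / c n)
        = fun n : ℕ => (n:ℝ) * (A n).toReal / c n := by
      funext n; rw [hIeq n]
    rw [heq]
    refine tendsto_of_tendsto_of_tendsto_of_le_of_le' tendsto_const_nhds part1 ?_ ?_
    · filter_upwards [eventually_ge_atTop 1] with n hn
      have hcn : 0 < c n := hpos n hn
      positivity
    · filter_upwards [eventually_ge_atTop 1] with n hn
      have hcn : 0 < c n := hpos n hn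
      exact div_le_div_of_nonneg_right (hle n hn) hcn.le
end
end

section
/- Let X be a B-valued random variable and let {c_n} be a sequence of positive reals such that c_n/√n is nondecreasing and tends to infinity, and such that for every ε > 0 there is m_ε ≥ 1 with c_n/c_m ≤ (1+ε)·(n/m) for all m_ε ≤ m < n. Assume ∑_{n=1}^∞ P{‖X‖ ≥ c_n} < ∞. Then for any subsequence n_j ↗ ∞ of positive integers for which there exist constants 1 < a₁ < a₂ < ∞ with a₁ < n_{j+1}/n_j ≤ a₂ for all sufficiently large j, one has ∑_{j=1}^∞ n_j·𝔼[‖X‖³·1{‖X‖ ≤ c_{n_j}}] / c_{n_j}³ < ∞. -/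
open MeasureTheory ProbabilityTheory Filter Set ENNReal

noncomputable section

private lemma aux_growth {n : ℕ → ℕ} {a : ℝ} (ha : 0 ≤ a) {j₁ : ℕ}
    (h : ∀ j, j₁ ≤ j → a * n j ≤ n (j+1)) :
    ∀ k j, j₁ ≤ k → k ≤ j → (n k : ℝ) * a ^ (j - k) ≤ n j := by
  intro k j hk hkj
  induction j, hkj using Nat.le_induction with
  | base => simp
  | succ j hkj ih =>
    have h2 : (j + 1 - k) = (j - k) + 1 := by omega
    rw [h2, pow_succ, ← mul_assoc]
    calc (n k : ℝ) * a ^ (j - k) * a ≤ (n j : ℝ) * a :=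
          mul_le_mul_of_nonneg_right ih ha
      _ = a * n j := mul_comm _ _
      _ ≤ n (j + 1) := h j (hk.trans hkj)

private lemma aux_sqrt_pow {a : ℝ} (ha : 0 ≤ a) (m : ℕ) :
    Real.sqrt (a ^ m) = Real.sqrt a ^ m := by
  have h1 : (Real.sqrt a ^ m) ^ 2 = a ^ m := by
    rw [← pow_right_comm, Real.sq_sqrt ha]
  rw [← h1, Real.sqrt_sq (pow_nonneg (Real.sqrt_nonneg a) m)]

private lemma aux_dbound {c : ℕ → ℝ} (hcpos : ∀ m : ℕ, 1 ≤ m → 0 < c m)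
    (hcs : ∀ m k : ℕ, 1 ≤ m → m ≤ k → c m / Real.sqrt m ≤ c k / Real.sqrt k)
    {n : ℕ → ℕ} (hn1 : ∀ j, 1 ≤ n j) (hmono : Monotone n)
    {a : ℝ} (ha : 1 < a) {j₁ : ℕ} (h : ∀ j, j₁ ≤ j → a * n j ≤ n (j+1))
    {k j : ℕ} (hk : j₁ ≤ k) (hkj : k ≤ j) :
    (n j : ℝ) / c (n j) ^ 3 ≤ (n k : ℝ) / c (n k) ^ 3 * ((Real.sqrt a)⁻¹) ^ (j - k) := by
  have ha0 : (0:ℝ) < a := lt_trans one_pos ha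
  have hsa : 1 < Real.sqrt a := by
    rw [show (1:ℝ) = Real.sqrt 1 from Real.sqrt_one.symm]
    exact Real.sqrt_lt_sqrt one_pos.le ha
  have hsa0 : 0 < Real.sqrt a := lt_trans one_pos hsa
  set r := (Real.sqrt a)⁻¹ with hr
  have hr0 : 0 < r := inv_pos.2 hsa0
  have hnk : (0:ℝ) < n k := by exact_mod_cast hn1 k
  have hnj : (0:ℝ) < n j := by exact_mod_cast hn1 j
  have hsk : 0 < Real.sqrt (n k) := Real.sqrt_pos.2 hnk
  have hsj : 0 < Real.sqrt (n j) := Real.sqrt_pos.2 hnj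
  have hck : 0 < c (n k) := hcpos _ (hn1 k)
  have hcj : 0 < c (n j) := hcpos _ (hn1 j)
  have hβ : c (n k) / Real.sqrt (n k) ≤ c (n j) / Real.sqrt (n j) :=
    hcs _ _ (hn1 k) (hmono hkj)
  have hβk : 0 < c (n k) / Real.sqrt (n k) := div_pos hck hsk
  have hβj : 0 < c (n j) / Real.sqrt (n j) := div_pos hcj hsj
  have hgrow : Real.sqrt (n k) ≤ r ^ (j - k) * Real.sqrt (n j) := by
    have h1 : (n k : ℝ) * a ^ (j - k) ≤ n j := aux_growth ha0.le h k j hk hkj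
    have h2 : Real.sqrt ((n k : ℝ) * a ^ (j-k)) ≤ Real.sqrt (n j) := Real.sqrt_le_sqrt h1
    rw [Real.sqrt_mul hnk.le, aux_sqrt_pow ha0.le] at h2
    have h4 := mul_le_mul_of_nonneg_right h2 (le_of_lt (pow_pos hr0 (j-k)))
    calc Real.sqrt (n k) = Real.sqrt (n k) * ((Real.sqrt a) * r)^(j-k) := by
          rw [mul_inv_cancel₀ hsa0.ne', one_pow, mul_one]
      _ = Real.sqrt (n k) * (Real.sqrt a)^(j-k) * r^(j-k) := by rw [mul_pow]; ring
      _ ≤ Real.sqrt (n j) * r^(j-k) := h4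
      _ = r^(j-k) * Real.sqrt (n j) := mul_comm _ _
  have hrew : ∀ i : ℕ, 1 ≤ n i →
      (n i : ℝ) / c (n i) ^ 3 = 1 / ((c (n i) / Real.sqrt (n i))^3 * Real.sqrt (n i)) := by
    intro i hi
    have hni : (0:ℝ) < n i := by exact_mod_cast hi
    have hsi : 0 < Real.sqrt (n i) := Real.sqrt_pos.2 hni
    have hci : 0 < c (n i) := hcpos _ hi
    have hsq : Real.sqrt (n i) ^ 2 = (n i : ℝ) := Real.sq_sqrt hni.le
    have h3 : Real.sqrt (n i) ^ 3 = (n i : ℝ) * Real.sqrt (n i) := by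
      rw [pow_succ, hsq]
    field_simp
    rw [hsq]
  rw [hrew k (hn1 k), hrew j (hn1 j)]
  rw [one_div, one_div, inv_mul_eq_div, ← one_div, div_le_div_iff₀
    (by positivity) (by positivity), one_mul]
  calc (c (n k) / Real.sqrt (n k))^3 * Real.sqrt (n k)
      ≤ (c (n k) / Real.sqrt (n k))^3 * (r^(j-k) * Real.sqrt (n j)) :=
        mul_le_mul_of_nonneg_left hgrow (by positivity)
    _ ≤ (c (n j) / Real.sqrt (n j))^3 * (r^(j-k) * Real.sqrt (n j)) :=
        mul_le_mul_of_nonneg_right (pow_le_pow_left₀ hβk.le hβ 3) (by positivity)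
    _ = r ^ (j - k) * ((c (n j) / Real.sqrt (n j))^3 * Real.sqrt (n j)) := by ring

/-- Fact (4.11): along any geometrically growing subsequence `n_j`,
`∑_j n_j 𝔼‖X‖³1{‖X‖ ≤ c_{n_j}} / c_{n_j}³ < ∞`. -/
theorem truncated_third_moment_summable
    {Ω B : Type*} [MeasurableSpace Ω] (μ : Measure Ω) [IsProbabilityMeasure μ]
    [NormedAddCommGroup B] [NormedSpace ℝ B] [CompleteSpace B] [SecondCountableTopology B]
    [MeasurableSpace B] [BorelSpace B]
    (X0 : Ω → B) (hmeas0 : Measurable X0)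
    (c : ℕ → ℝ) (hc : CSeq c)
    (hmom : (∑' n : ℕ, μ {ω | c n ≤ ‖X0 ω‖}) < ⊤)
    (n : ℕ → ℕ) (hn1 : ∀ j, 1 ≤ n j) (hmono : StrictMono n)
    (a₁ a₂ : ℝ) (ha₁ : 1 < a₁) (ha₂ : a₁ < a₂)
    (hratio : ∀ᶠ j : ℕ in atTop,
      a₁ < (n (j + 1) : ℝ) / (n j) ∧ (n (j + 1) : ℝ) / (n j) ≤ a₂) :
    Summable (fun j : ℕ =>
      (n j : ℝ) * (∫ ω in {ω | ‖X0 ω‖ ≤ c (n j)}, ‖X0 ω‖ ^ 3 ∂μ) / c (n j) ^ 3) := by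
  classical
  obtain ⟨hcpos, hcs, -, -⟩ := hc
  have hcmono : ∀ p q : ℕ, 1 ≤ p → p ≤ q → c p ≤ c q := by
    intro p q hp hpq
    have hq : 1 ≤ q := le_trans hp hpq
    have hsp : (0:ℝ) < Real.sqrt p := Real.sqrt_pos.2 (by exact_mod_cast hp)
    have hsq : (0:ℝ) < Real.sqrt q := Real.sqrt_pos.2 (by exact_mod_cast hq)
    have hs : Real.sqrt p ≤ Real.sqrt q := Real.sqrt_le_sqrt (by exact_mod_cast hpq)
    have hcq : 0 < c q := hcpos q hq
    calc c p = (c p / Real.sqrt p) * Real.sqrt p := (div_mul_cancel₀ _ hsp.ne').symm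
      _ ≤ (c q / Real.sqrt q) * Real.sqrt q :=
          mul_le_mul (hcs p q hp hpq) hs hsp.le (by positivity)
      _ = c q := div_mul_cancel₀ _ hsq.ne'
  obtain ⟨j₁, hj₁⟩ := eventually_atTop.1 hratio
  have hnpos : ∀ j, (0:ℝ) < n j := fun j => by exact_mod_cast hn1 j
  have hrat1 : ∀ j, j₁ ≤ j → a₁ * n j ≤ n (j+1) := by
    intro j hj
    have h := (hj₁ j hj).1
    rw [lt_div_iff₀ (hnpos j)] at h
    linarith
  have hrat2 : ∀ j, j₁ ≤ j → (n (j+1) : ℝ) ≤ a₂ * n j := by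
    intro j hj
    have h := (hj₁ j hj).2
    rw [div_le_iff₀ (hnpos j)] at h
    linarith
  set S : ℕ → Set Ω := fun j => {ω | ‖X0 ω‖ ≤ c (n j)} with hS
  set I : ℕ → ℝ≥0∞ := fun j => ∫⁻ ω in S j, ENNReal.ofReal (‖X0 ω‖^3) ∂μ with hIdef
  set d : ℕ → ℝ≥0∞ := fun j => ENNReal.ofReal ((n j : ℝ) / c (n j)^3) with hd
  set p : ℕ → ℝ≥0∞ := fun k => μ {ω | c (n k) ≤ ‖X0 ω‖} with hp
  set e : ℕ → ℝ≥0∞ := fun k => ENNReal.ofReal (c (n (k+1))^3) * p k with he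
  have hcnpos : ∀ j, 0 < c (n j) := fun j => hcpos _ (hn1 j)
  -- Step 1: layered bound on the truncated lintegral
  have hI : ∀ j, I j ≤ ENNReal.ofReal (c (n 0)^3) + ∑ k ∈ Finset.range j, e k := by
    intro j
    induction j with
    | zero =>
      simp only [Finset.range_zero, Finset.sum_empty, add_zero]
      calc I 0 ≤ ∫⁻ _ω in S 0, ENNReal.ofReal (c (n 0)^3) ∂μ := by
            apply setLIntegral_mono measurable_const
            intro x hx
            exact ENNReal.ofReal_le_ofReal (pow_le_pow_left₀ (norm_nonneg _) hx 3)
        _ = ENNReal.ofReal (c (n 0)^3) * μ (S 0) := setLIntegral_const _ _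
        _ ≤ ENNReal.ofReal (c (n 0)^3) * 1 := mul_le_mul_right prob_le_one _
        _ = ENNReal.ofReal (c (n 0)^3) := mul_one _
    | succ j ih =>
      have hsub : S (j+1) ⊆ S j ∪ (S (j+1) ∩ {ω | c (n j) ≤ ‖X0 ω‖}) := by
        intro ω hω
        by_cases hωj : ‖X0 ω‖ ≤ c (n j)
        · exact Or.inl hωj
        · exact Or.inr ⟨hω, (not_le.1 hωj).le⟩
      have hbound : ∫⁻ ω in S (j+1) ∩ {ω | c (n j) ≤ ‖X0 ω‖},
          ENNReal.ofReal (‖X0 ω‖^3) ∂μ ≤ e j := by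
        calc ∫⁻ ω in S (j+1) ∩ {ω | c (n j) ≤ ‖X0 ω‖}, ENNReal.ofReal (‖X0 ω‖^3) ∂μ
            ≤ ∫⁻ _ω in S (j+1) ∩ {ω | c (n j) ≤ ‖X0 ω‖},
                ENNReal.ofReal (c (n (j+1))^3) ∂μ := by
              apply setLIntegral_mono measurable_const
              intro x hx
              exact ENNReal.ofReal_le_ofReal (pow_le_pow_left₀ (norm_nonneg _) hx.1 3)
          _ = ENNReal.ofReal (c (n (j+1))^3) * μ (S (j+1) ∩ {ω | c (n j) ≤ ‖X0 ω‖}) :=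
              setLIntegral_const _ _
          _ ≤ e j := by
              simp only [he, hp]
              exact mul_le_mul_right (measure_mono inter_subset_right) _
      calc I (j+1) ≤ ∫⁻ ω in S j ∪ (S (j+1) ∩ {ω | c (n j) ≤ ‖X0 ω‖}),
              ENNReal.ofReal (‖X0 ω‖^3) ∂μ := lintegral_mono_set hsub
        _ ≤ I j + ∫⁻ ω in S (j+1) ∩ {ω | c (n j) ≤ ‖X0 ω‖},
              ENNReal.ofReal (‖X0 ω‖^3) ∂μ := lintegral_union_le _ _ _
        _ ≤ (ENNReal.ofReal (c (n 0)^3) + ∑ k ∈ Finset.range j, e k) + e j :=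
              add_le_add ih hbound
        _ = ENNReal.ofReal (c (n 0)^3) + ∑ k ∈ Finset.range (j+1), e k := by
              rw [Finset.sum_range_succ, add_assoc]
  -- Step 2: geometric decay of d along the subsequence
  set R : ℝ≥0∞ := ENNReal.ofReal ((Real.sqrt a₁)⁻¹) with hR
  have hsa : 1 < Real.sqrt a₁ := by
    rw [show (1:ℝ) = Real.sqrt 1 from Real.sqrt_one.symm]
    exact Real.sqrt_lt_sqrt one_pos.le ha₁
  have hrlt1 : (Real.sqrt a₁)⁻¹ < 1 := inv_lt_one_of_one_lt₀ hsa
  have hrpos : (0:ℝ) < (Real.sqrt a₁)⁻¹ := inv_pos.2 (lt_trans one_pos hsa)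
  have hR1 : R < 1 := ENNReal.ofReal_lt_one.2 hrlt1
  have hG : (1 - R)⁻¹ < ⊤ := ENNReal.inv_lt_top.2 (tsub_pos_of_lt hR1)
  have hdle : ∀ k j, j₁ ≤ k → k ≤ j → d j ≤ d k * R ^ (j - k) := by
    intro k j hk hkj
    have h := aux_dbound hcpos hcs hn1 hmono.monotone ha₁ hrat1 hk hkj
    calc d j ≤ ENNReal.ofReal ((n k : ℝ) / c (n k)^3 * ((Real.sqrt a₁)⁻¹) ^ (j-k)) :=
          ENNReal.ofReal_le_ofReal h
      _ = d k * R ^ (j - k) := by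
          rw [ENNReal.ofReal_mul (div_nonneg (Nat.cast_nonneg _)
            (pow_nonneg (hcnpos k).le 3)), ENNReal.ofReal_pow hrpos.le]
  have htail : ∀ k, j₁ ≤ k → ∑' i, d (i + k) ≤ d k * (1-R)⁻¹ := by
    intro k hk
    calc ∑' i, d (i + k) ≤ ∑' i, d k * R ^ i := by
          apply ENNReal.tsum_le_tsum
          intro i
          have h := hdle k (i + k) hk (Nat.le_add_left _ _)
          simpa [Nat.add_sub_cancel] using h
      _ = d k * ∑' i, R ^ i := ENNReal.tsum_mul_left
      _ = d k * (1-R)⁻¹ := by rw [ENNReal.tsum_geometric]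
  have hdne : ∀ j, d j ≠ ⊤ := fun j => ENNReal.ofReal_ne_top
  have hdsum : ∑' j, d j ≠ ⊤ := by
    rw [← Summable.sum_add_tsum_nat_add' (k := j₁) ENNReal.summable]
    apply ENNReal.add_ne_top.2
    constructor
    · exact (ENNReal.sum_lt_top.2 fun j _ => (hdne j).lt_top).ne
    · exact (lt_of_le_of_lt (htail j₁ le_rfl)
        (ENNReal.mul_lt_top (hdne j₁).lt_top hG)).ne
  -- Step 3: summability of n_{k+1} p_k from the moment condition
  have hqmono : ∀ k m : ℕ, 1 ≤ m → m ≤ n k → p k ≤ μ {ω | c m ≤ ‖X0 ω‖} := by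
    intro k m hm hmk
    apply measure_mono
    intro ω hω
    exact le_trans (hcmono m (n k) hm hmk) hω
  have hiii : ∑' i : ℕ, (n (i + j₁ + 2) : ℝ≥0∞) * p (i + j₁ + 1) ≠ ⊤ := by
    set lam : ℝ := a₂ * (1 - a₁⁻¹)⁻¹ with hlam
    have ha₁inv : a₁⁻¹ < 1 := inv_lt_one_of_one_lt₀ ha₁
    have hlampos : 0 < lam := mul_pos (lt_trans (lt_trans one_pos ha₁) ha₂)
      (inv_pos.2 (by linarith))
    have hkey : ∀ i : ℕ, (n (i + j₁ + 2) : ℝ≥0∞) * p (i + j₁ + 1) ≤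
        ENNReal.ofReal lam * ∑ m ∈ Finset.Ioc (n (i + j₁)) (n (i + j₁ + 1)),
          μ {ω | c m ≤ ‖X0 ω‖} := by
      intro i
      rw [show i + j₁ + 2 = (i + j₁ + 1) + 1 from by omega]
      have hk1 : j₁ ≤ i + j₁ + 1 := by omega
      have hk0 : j₁ ≤ i + j₁ := by omega
      have h1 : (n (i + j₁ + 1 + 1) : ℝ) ≤ a₂ * n (i + j₁ + 1) := hrat2 _ hk1
      have h2 : a₁ * n (i + j₁) ≤ n (i + j₁ + 1) := hrat1 _ hk0
      have hle : n (i + j₁) ≤ n (i + j₁ + 1) := hmono.monotone (by omega)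
      have hineq : (n (i + j₁ + 1 + 1) : ℝ) ≤
          lam * ((n (i + j₁ + 1) - n (i + j₁) : ℕ) : ℝ) := by
        have hcast : ((n (i + j₁ + 1) - n (i + j₁) : ℕ) : ℝ)
            = (n (i + j₁ + 1) : ℝ) - n (i + j₁) := Nat.cast_sub hle
        rw [hcast, hlam]
        have h3 : (n (i + j₁) : ℝ) ≤ a₁⁻¹ * n (i + j₁ + 1) := by
          rw [inv_mul_eq_div, le_div_iff₀ (by linarith : (0:ℝ) < a₁)]
          linarith
        have h5 : (n (i + j₁ + 1) : ℝ) ≤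
            (1 - a₁⁻¹)⁻¹ * ((n (i + j₁ + 1) : ℝ) - n (i + j₁)) := by
          rw [inv_mul_eq_div, le_div_iff₀ (by linarith : (0:ℝ) < 1 - a₁⁻¹)]
          nlinarith
        calc (n (i + j₁ + 1 + 1) : ℝ) ≤ a₂ * n (i + j₁ + 1) := h1
          _ ≤ a₂ * ((1 - a₁⁻¹)⁻¹ * ((n (i + j₁ + 1) : ℝ) - n (i + j₁))) :=
              mul_le_mul_of_nonneg_left h5 (by linarith : (0:ℝ) ≤ a₂)
          _ = a₂ * (1 - a₁⁻¹)⁻¹ * ((n (i + j₁ + 1) : ℝ) - n (i + j₁)) := by ring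
      have hEN : (n (i + j₁ + 1 + 1) : ℝ≥0∞) ≤
          ENNReal.ofReal lam * ((n (i + j₁ + 1) - n (i + j₁) : ℕ) : ℝ≥0∞) := by
        rw [← ENNReal.ofReal_natCast (n (i + j₁ + 1 + 1)),
          ← ENNReal.ofReal_natCast (n (i + j₁ + 1) - n (i + j₁)),
          ← ENNReal.ofReal_mul hlampos.le]
        exact ENNReal.ofReal_le_ofReal hineq
      have hcard : ((n (i + j₁ + 1) - n (i + j₁) : ℕ) : ℝ≥0∞) * p (i + j₁ + 1) ≤
          ∑ m ∈ Finset.Ioc (n (i + j₁)) (n (i + j₁ + 1)), μ {ω | c m ≤ ‖X0 ω‖} := by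
        rw [← Nat.card_Ioc, ← nsmul_eq_mul]
        apply Finset.card_nsmul_le_sum
        intro m hm
        rw [Finset.mem_Ioc] at hm
        have hm1 : 1 ≤ m := le_trans (hn1 (i + j₁)) hm.1.le
        exact hqmono (i + j₁ + 1) m hm1 hm.2
      calc (n (i + j₁ + 1 + 1) : ℝ≥0∞) * p (i + j₁ + 1)
          ≤ (ENNReal.ofReal lam * ((n (i + j₁ + 1) - n (i + j₁) : ℕ) : ℝ≥0∞))
              * p (i + j₁ + 1) := mul_le_mul_left hEN _
        _ = ENNReal.ofReal lam
              * (((n (i + j₁ + 1) - n (i + j₁) : ℕ) : ℝ≥0∞) * p (i + j₁ + 1)) :=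
            mul_assoc _ _ _
        _ ≤ ENNReal.ofReal lam * ∑ m ∈ Finset.Ioc (n (i + j₁)) (n (i + j₁ + 1)),
              μ {ω | c m ≤ ‖X0 ω‖} := mul_le_mul_right hcard _
    have hconsec : ∑' i : ℕ, ∑ m ∈ Finset.Ioc (n (i + j₁)) (n (i + j₁ + 1)),
        μ {ω | c m ≤ ‖X0 ω‖} ≤ ∑' m : ℕ, μ {ω | c m ≤ ‖X0 ω‖} := by
      apply ENNReal.tsum_le_of_sum_range_le
      intro N
      have heq : ∀ N : ℕ, ∑ i ∈ Finset.range N,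
          ∑ m ∈ Finset.Ioc (n (i + j₁)) (n (i + j₁ + 1)), μ {ω | c m ≤ ‖X0 ω‖}
          = ∑ m ∈ Finset.Ioc (n j₁) (n (N + j₁)), μ {ω | c m ≤ ‖X0 ω‖} := by
        intro N
        induction N with
        | zero => simp
        | succ N ih =>
          rw [Finset.sum_range_succ, ih,
            Finset.sum_Ioc_consecutive _ (hmono.monotone (by omega : j₁ ≤ N + j₁))
              (hmono.monotone (by omega : N + j₁ ≤ N + j₁ + 1))]
          rw [show N + j₁ + 1 = N + 1 + j₁ from by omega]
      rw [heq N]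
      exact ENNReal.sum_le_tsum _
    have hfin : ENNReal.ofReal lam * ∑' m : ℕ, μ {ω | c m ≤ ‖X0 ω‖} < ⊤ :=
      ENNReal.mul_lt_top ENNReal.ofReal_lt_top hmom
    apply ne_of_lt
    calc ∑' i : ℕ, (n (i + j₁ + 2) : ℝ≥0∞) * p (i + j₁ + 1)
        ≤ ∑' i : ℕ, ENNReal.ofReal lam
            * ∑ m ∈ Finset.Ioc (n (i + j₁)) (n (i + j₁ + 1)), μ {ω | c m ≤ ‖X0 ω‖} :=
          ENNReal.tsum_le_tsum hkey
      _ = ENNReal.ofReal lam * ∑' i : ℕ,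
            ∑ m ∈ Finset.Ioc (n (i + j₁)) (n (i + j₁ + 1)), μ {ω | c m ≤ ‖X0 ω‖} :=
          ENNReal.tsum_mul_left
      _ ≤ ENNReal.ofReal lam * ∑' m : ℕ, μ {ω | c m ≤ ‖X0 ω‖} := mul_le_mul_right hconsec _
      _ < ⊤ := hfin
  -- Step 4: the master bound
  have hpne : ∀ k, p k ≠ ⊤ := fun k => (measure_lt_top μ _).ne
  have hene : ∀ k, e k ≠ ⊤ := fun k =>
    (ENNReal.mul_lt_top ENNReal.ofReal_lt_top (hpne k).lt_top).ne
  set τ : ℕ → ℝ≥0∞ := fun k => ∑' i, d (i + (k+1)) with hτ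
  have hτle : ∀ k, τ k ≤ ∑' j, d j := by
    intro k
    conv_rhs => rw [← Summable.sum_add_tsum_nat_add' (k := k+1) ENNReal.summable]
    exact le_add_self
  have hτne : ∀ k, τ k ≠ ⊤ := fun k => (lt_of_le_of_lt (hτle k) hdsum.lt_top).ne
  have hdouble : ∑' j, ∑ k ∈ Finset.range j, d j * e k = ∑' k, τ k * e k := by
    have h1 : ∀ j, ∑ k ∈ Finset.range j, d j * e k =
        ∑' k, (if k < j then d j * e k else 0) := by
      intro j
      rw [tsum_eq_sum (s := Finset.range j) (fun b hb => if_neg (by simpa using hb))]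
      exact Finset.sum_congr rfl fun k hk => (if_pos (Finset.mem_range.mp hk)).symm
    have h2 : ∀ k, ∑' j, (if k < j then d j * e k else 0) = τ k * e k := by
      intro k
      have h3 : ∀ j, (if k < j then d j * e k else 0) = (if k < j then d j else 0) * e k := by
        intro j
        rw [ite_mul, zero_mul]
      simp_rw [h3]
      rw [ENNReal.tsum_mul_right]
      congr 1
      rw [← Summable.sum_add_tsum_nat_add' (k := k+1) ENNReal.summable]
      have h4 : ∑ j ∈ Finset.range (k+1), (if k < j then d j else 0) = 0 := by
        apply Finset.sum_eq_zero
        intro j hj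
        rw [if_neg (by simp only [Finset.mem_range] at hj; omega)]
      rw [h4, zero_add]
      exact tsum_congr fun i => if_pos (by omega)
    calc ∑' j, ∑ k ∈ Finset.range j, d j * e k
        = ∑' j, ∑' k, (if k < j then d j * e k else 0) := tsum_congr h1
      _ = ∑' k, ∑' j, (if k < j then d j * e k else 0) := ENNReal.tsum_comm
      _ = ∑' k, τ k * e k := tsum_congr h2
  have htailterm : ∀ i : ℕ, τ (i + (j₁ + 1)) * e (i + (j₁ + 1)) ≤
      (1-R)⁻¹ * ((n (i + j₁ + 2) : ℝ≥0∞) * p (i + j₁ + 1)) := by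
    intro i
    rw [show i + (j₁ + 1) = i + j₁ + 1 from by omega,
      show i + j₁ + 2 = (i + j₁ + 1) + 1 from by omega]
    have hτk : τ (i + j₁ + 1) ≤ d (i + j₁ + 1 + 1) * (1-R)⁻¹ :=
      htail (i + j₁ + 1 + 1) (by omega)
    have hde : d (i + j₁ + 1 + 1) * ENNReal.ofReal (c (n (i + j₁ + 1 + 1))^3)
        = (n (i + j₁ + 1 + 1) : ℝ≥0∞) := by
      simp only [hd]
      rw [← ENNReal.ofReal_mul (div_nonneg (Nat.cast_nonneg _)
          (pow_nonneg (hcnpos _).le 3)),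
        div_mul_cancel₀ _ (pow_ne_zero 3 (hcnpos _).ne'), ENNReal.ofReal_natCast]
    calc τ (i + j₁ + 1) * e (i + j₁ + 1)
        ≤ (d (i + j₁ + 1 + 1) * (1-R)⁻¹) * e (i + j₁ + 1) := mul_le_mul_left hτk _
      _ = (1-R)⁻¹ * ((d (i + j₁ + 1 + 1) * ENNReal.ofReal (c (n (i + j₁ + 1 + 1))^3))
            * p (i + j₁ + 1)) := by
          simp only [he]; ring
      _ = (1-R)⁻¹ * ((n (i + j₁ + 1 + 1) : ℝ≥0∞) * p (i + j₁ + 1)) := by rw [hde]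
  have hsecond : ∑' k, τ k * e k ≠ ⊤ := by
    rw [← Summable.sum_add_tsum_nat_add' (k := j₁ + 1) ENNReal.summable]
    apply ENNReal.add_ne_top.2
    constructor
    · exact (ENNReal.sum_lt_top.2 fun k _ =>
        ENNReal.mul_lt_top (hτne k).lt_top (hene k).lt_top).ne
    · have hfin2 : ∑' i : ℕ, (1-R)⁻¹ * ((n (i + j₁ + 2) : ℝ≥0∞) * p (i + j₁ + 1)) ≠ ⊤ := by
        rw [ENNReal.tsum_mul_left]
        exact (ENNReal.mul_lt_top hG hiii.lt_top).ne
      exact ne_top_of_le_ne_top hfin2 (ENNReal.tsum_le_tsum htailterm)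
  have hmain : ∑' j, d j * I j ≠ ⊤ := by
    have hb : ∀ j, d j * I j ≤
        d j * ENNReal.ofReal (c (n 0)^3) + ∑ k ∈ Finset.range j, d j * e k := by
      intro j
      calc d j * I j ≤ d j * (ENNReal.ofReal (c (n 0)^3) + ∑ k ∈ Finset.range j, e k) :=
            mul_le_mul_right (hI j) _
        _ = d j * ENNReal.ofReal (c (n 0)^3) + ∑ k ∈ Finset.range j, d j * e k := by
            rw [mul_add, Finset.mul_sum]
    apply ne_top_of_le_ne_top _ (ENNReal.tsum_le_tsum hb)
    rw [ENNReal.tsum_add, ENNReal.tsum_mul_right, hdouble]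
    exact ENNReal.add_ne_top.2
      ⟨(ENNReal.mul_lt_top hdsum.lt_top ENNReal.ofReal_lt_top).ne, hsecond⟩
  -- Step 5: conclude real summability
  have hfnonneg : ∀ j, (0:ℝ) ≤
      (n j : ℝ) * (∫ ω in {ω | ‖X0 ω‖ ≤ c (n j)}, ‖X0 ω‖ ^ 3 ∂μ) / c (n j) ^ 3 := by
    intro j
    exact div_nonneg (mul_nonneg (Nat.cast_nonneg _)
      (integral_nonneg fun ω => by positivity)) (pow_nonneg (hcnpos j).le 3)
  have hle : ∀ j, ENNReal.ofReal
      ((n j : ℝ) * (∫ ω in {ω | ‖X0 ω‖ ≤ c (n j)}, ‖X0 ω‖ ^ 3 ∂μ) / c (n j) ^ 3)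
      ≤ d j * I j := by
    intro j
    have h1 : (n j : ℝ) * (∫ ω in {ω | ‖X0 ω‖ ≤ c (n j)}, ‖X0 ω‖ ^ 3 ∂μ) / c (n j) ^ 3
        = ((n j : ℝ) / c (n j)^3) * ∫ ω in S j, ‖X0 ω‖ ^ 3 ∂μ :=
      mul_div_right_comm _ _ _
    rw [h1, ENNReal.ofReal_mul (div_nonneg (Nat.cast_nonneg _) (pow_nonneg (hcnpos j).le 3))]
    apply mul_le_mul_right
    calc ENNReal.ofReal (∫ ω in S j, ‖X0 ω‖ ^ 3 ∂μ)
        ≤ (‖∫ ω in S j, ‖X0 ω‖ ^ 3 ∂μ‖₊ : ℝ≥0∞) := Real.ofReal_le_enorm _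
      _ ≤ ∫⁻ ω in S j, (‖(‖X0 ω‖ ^ 3 : ℝ)‖₊ : ℝ≥0∞) ∂μ :=
          enorm_integral_le_lintegral_enorm _
      _ = I j := lintegral_congr fun ω => Real.enorm_eq_ofReal (by positivity)
  have hfin : ∀ j, d j * I j ≠ ⊤ := fun j => ne_top_of_le_ne_top hmain (ENNReal.le_tsum j)
  apply Summable.of_nonneg_of_le hfnonneg (fun j => ?_) (ENNReal.summable_toReal hmain)
  calc (n j : ℝ) * (∫ ω in {ω | ‖X0 ω‖ ≤ c (n j)}, ‖X0 ω‖ ^ 3 ∂μ) / c (n j) ^ 3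
      = (ENNReal.ofReal ((n j : ℝ)
          * (∫ ω in {ω | ‖X0 ω‖ ≤ c (n j)}, ‖X0 ω‖ ^ 3 ∂μ) / c (n j) ^ 3)).toReal :=
        (ENNReal.toReal_ofReal (hfnonneg j)).symm
    _ ≤ (d j * I j).toReal := ENNReal.toReal_mono (hfin j) (hle j)
end
end
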